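/- For every positive integer k, the graph K_{k,2k+2}^m := the join of an empty graph on k vertices with the disjoint union of 2k - 2 isolated vertices and two disjoint edges (2K_2), contains every tree on 2k + 3 vertices as a subgraph. -/

import Mathlib

open SimpleGraph Finset

/-- The signless Laplacian matrix `Q(G) = D(G) + A(G)` over `ℝ`. -/
def signlessLaplacian {V : Type*} [Fintype V] [DecidableEq V] (G : SimpleGraph V)
    [DecidableRel G.Adj] : Matrix V V ℝ :=
  SimpleGraph.degMatrix ℝ G + G.adjMatrix ℝ

/-- `q` is the largest eigenvalue of the real matrix `M`. -/
def IsMaxEigenvalue {V : Type*} [Fintype V] [DecidableEq V] (M : Matrix V V ℝ) (q : ℝ) : Prop :=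
  Module.End.HasEigenvalue (Matrix.toLin' M) q ∧
    ∀ μ : ℝ, Module.End.HasEigenvalue (Matrix.toLin' M) μ → μ ≤ q

/-- `S_{n,k}`: the join of `K_k` with an empty graph on `n - k` vertices. -/
def Snk (n k : ℕ) : SimpleGraph (Fin n) where
  Adj u v := u ≠ v ∧ (u.val < k ∨ v.val < k)
  symm := ⟨fun u v ⟨h1, h2⟩ => ⟨h1.symm, h2.symm⟩⟩
  loopless := ⟨fun u ⟨h, _⟩ => h rfl⟩

instance (n k : ℕ) : DecidableRel (Snk n k).Adj := fun u v =>
  inferInstanceAs (Decidable (u ≠ v ∧ (u.val < k ∨ v.val < k)))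

/-- `S_{n,k}^+`: `S_{n,k}` plus one edge inside the independent set (between
vertices `k` and `k+1`). -/
def SnkPlus (n k : ℕ) : SimpleGraph (Fin n) where
  Adj u v := u ≠ v ∧ (u.val < k ∨ v.val < k ∨ (u.val ≤ k + 1 ∧ v.val ≤ k + 1))
  symm := ⟨fun u v ⟨h1, h2⟩ => ⟨h1.symm, by tauto⟩⟩
  loopless := ⟨fun u ⟨h, _⟩ => h rfl⟩

instance (n k : ℕ) : DecidableRel (SnkPlus n k).Adj := fun u v =>
  inferInstanceAs (Decidable (u ≠ v ∧ (u.val < k ∨ v.val < k ∨ (u.val ≤ k + 1 ∧ v.val ≤ k + 1))))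

/-- `T` is contained in `G` as a subgraph: there is an injective graph homomorphism. -/
def ContainsSub {α β : Type*} (T : SimpleGraph α) (G : SimpleGraph β) : Prop :=
  ∃ f : T →g G, Function.Injective f

/-- The join `G ∨ H` of two graphs: all edges between the two vertex sets are added. -/
def graphJoin {α β : Type*} (G : SimpleGraph α) (H : SimpleGraph β) :
    SimpleGraph (α ⊕ β) where
  Adj u v := match u, v with
    | Sum.inl a, Sum.inl b => G.Adj a b
    | Sum.inr a, Sum.inr b => H.Adj a b
    | _, _ => True
  symm := ⟨by rintro (a | a) (b | b) h <;> first | exact h.symm | trivial⟩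
  loopless := ⟨by rintro (a | a) h
                  · exact G.irrefl h
                  · exact H.irrefl h⟩

/-- `(2k-2)K_1 ∪ 2K_2` on `2k+2` vertices: two disjoint edges on the last four vertices. -/
def twoEdgesGraph (k : ℕ) : SimpleGraph (Fin (2 * k + 2)) where
  Adj a b := a ≠ b ∧
    ((a.val = 2 * k - 2 ∧ b.val = 2 * k - 1) ∨ (a.val = 2 * k - 1 ∧ b.val = 2 * k - 2) ∨
     (a.val = 2 * k ∧ b.val = 2 * k + 1) ∨ (a.val = 2 * k + 1 ∧ b.val = 2 * k))
  symm := ⟨fun a b ⟨h1, h2⟩ => ⟨h1.symm, by tauto⟩⟩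
  loopless := ⟨fun a ⟨h, _⟩ => h rfl⟩

/-!
Two-colour the tree and let `A` be the smaller colour class, so `|A| ≤ k + 1`. Every vertex on the
`k`-side of the join is adjacent to every vertex on the other side, so it suffices to find a set
`X` of at most `k` pairwise non-adjacent vertices whose complement (at most `2k + 2` vertices)
spans only edges that can be placed on the two disjoint edges of `2K₂`.

If `|A| ≤ k`, take `X = A`. Otherwise `|A| = k + 1`. If `A` contains a leaf `a`, take
`X = A \ {a}`; the only edge in the complement is the pendant edge at `a`. If not, the degree sum
over `A` is the number of edges, `2k + 2 = 2|A|`, so every vertex of `A` has degree exactly `2`.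
Two leaves of the tree then lie outside `A` and have distinct neighbours (a degree-`2` vertex with
two leaves as neighbours would be the whole tree), and `X` is the other colour class minus these
two leaves, whose pendant edges are the only edges left in the complement.
-/

open Fintype

theorem Function.exists_injective_eqOn_of_card_le {α β : Type*} [Fintype α] [Fintype β]
    (h : card α ≤ card β) {s : Set α} {f : α → β} (hf : s.InjOn f) :
    ∃ g : α → β, Function.Injective g ∧ s.EqOn g f := by
  classical
  obtain ⟨e⟩ := Function.Embedding.nonempty_of_card_le h
  have hext : ∀ a, Function.extend e f id (e a) = f a := e.injective.extend_apply f id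
  have hinj : (e '' s).InjOn (Function.extend e f id) := by
    rintro _ ⟨x, hx, rfl⟩ _ ⟨y, hy, rfl⟩ hxy
    rw [hext, hext] at hxy
    rw [hf hx hy hxy]
  obtain ⟨σ, hσ⟩ := Set.MapsTo.exists_equiv_extend_of_card_eq Finset.card_univ.symm
    (fun _ _ => Finset.mem_coe.2 (Finset.mem_univ _)) hinj
  refine ⟨fun a => σ (e a), Subtype.val_injective.comp (σ.injective.comp e.injective),
    fun a ha => ?_⟩
  exact (hσ _ (Set.mem_image_of_mem e ha)).trans (hext a)

theorem containsSub_of_injOn {V W : Type*} [Fintype V] [Fintype W] {G : SimpleGraph V}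
    {H : SimpleGraph W} (hcard : card V ≤ card W) {s : Set V} {f : V → W} (hf : s.InjOn f)
    (hG : ∀ ⦃u v⦄, G.Adj u v → u ∈ s ∧ v ∈ s ∧ H.Adj (f u) (f v)) : ContainsSub G H := by
  obtain ⟨g, hg, hgf⟩ := Function.exists_injective_eqOn_of_card_le hcard hf
  refine ⟨⟨g, fun {u v} huv => ?_⟩, hg⟩
  obtain ⟨hu, hv, hfuv⟩ := hG huv
  rwa [hgf hu, hgf hv]

theorem containsSub_graphJoin_bot {α β γ : Type*} [Fintype γ] {T : SimpleGraph α}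
    {H : SimpleGraph β} (X : Finset α) (hX : ∀ ⦃u v⦄, u ∈ X → v ∈ X → ¬ T.Adj u v)
    (hcard : #X ≤ card γ) (hY : ContainsSub (T.induce (↑X)ᶜ) H) :
    ContainsSub T (graphJoin (⊥ : SimpleGraph γ) H) := by
  classical
  obtain ⟨e⟩ := Function.Embedding.nonempty_of_card_le (α := X) (by simpa using hcard)
  obtain ⟨g, hg⟩ := hY
  let f : α → γ ⊕ β := fun v => if h : v ∈ X then .inl (e ⟨v, h⟩) else .inr (g ⟨v, h⟩)
  refine ⟨⟨f, fun {u v} huv => ?_⟩, fun u v huv => ?_⟩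
  · by_cases hu : u ∈ X <;> by_cases hv : v ∈ X <;>
      simp only [f, hu, hv, dif_pos, dif_neg, not_false_eq_true]
    · exact hX hu hv huv
    all_goals first | trivial | exact g.map_rel huv
  · by_cases hu : u ∈ X <;> by_cases hv : v ∈ X <;> simp [f, hu, hv] at huv
    · exact huv
    · exact congrArg Subtype.val (hg huv)

namespace SimpleGraph

variable {V : Type*} {G : SimpleGraph V}

theorem IsBipartite.exists_isBipartiteWith_compl [Fintype V] [DecidableEq V]
    (h : G.IsBipartite) : ∃ A : Finset V, G.IsBipartiteWith ↑A ↑Aᶜ ∧ 2 * #A ≤ card V := by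
  obtain ⟨c⟩ := h
  set A := univ.filter (c · = 0)
  have hA : G.IsBipartiteWith ↑A ↑Aᶜ := by
    refine ⟨by simpa using disjoint_compl_right, fun v w hvw => ?_⟩
    have := c.valid hvw
    simp only [A, coe_compl, coe_filter, Set.mem_compl_iff, Set.mem_ofPred_eq, Finset.mem_univ,
      true_and]
    omega
  by_cases hle : 2 * #A ≤ card V
  · exact ⟨A, hA, hle⟩
  · refine ⟨Aᶜ, by simpa using hA.symm, ?_⟩
    have := card_add_card_compl A
    omega

theorem Preconnected.eq_univ_of_adj_mem (h : G.Preconnected) {S : Set V} {v : V} (hv : v ∈ S)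
    (hS : ∀ ⦃u w⦄, u ∈ S → G.Adj u w → w ∈ S) : S = Set.univ := by
  refine Set.eq_univ_of_forall fun w => by_contra fun hw => ?_
  obtain ⟨p⟩ := h v w
  obtain ⟨d, -, hd, hd'⟩ := p.exists_boundary_dart S hv hw
  exact hd' (hS hd d.adj)

theorem Preconnected.card_le_three_of_degree_eq_two [Fintype V] [DecidableEq V]
    [DecidableRel G.Adj] (h : G.Preconnected) {a l₁ l₂ : V} (ha : G.degree a = 2)
    (hl₁ : G.degree l₁ = 1) (hl₂ : G.degree l₂ = 1) (hne : l₁ ≠ l₂) (h₁ : G.Adj l₁ a)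
    (h₂ : G.Adj l₂ a) : card V ≤ 3 := by
  have hnbr : G.neighborFinset a = {l₁, l₂} := by
    refine (eq_of_subset_of_card_le ?_ ?_).symm
    · simp [insert_subset_iff, h₁.symm, h₂.symm]
    · rw [card_neighborFinset_eq_degree, ha, card_pair hne]
  have hclosed : ∀ ⦃u w⦄, u ∈ (↑({a, l₁, l₂} : Finset V) : Set V) → G.Adj u w →
      w ∈ (↑({a, l₁, l₂} : Finset V) : Set V) := by
    intro u w hu huw
    simp only [coe_insert, coe_singleton, Set.mem_insert_iff, Set.mem_singleton_iff] at hu ⊢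
    rcases hu with rfl | rfl | rfl
    · rw [← mem_neighborFinset, hnbr, mem_insert, mem_singleton] at huw
      exact Or.inr huw
    · exact Or.inl ((degree_eq_one_iff_existsUnique_adj.1 hl₁).unique huw h₁)
    · exact Or.inl ((degree_eq_one_iff_existsUnique_adj.1 hl₂).unique huw h₂)
  have huniv := coe_eq_univ.1 (h.eq_univ_of_adj_mem (v := a) (by simp) hclosed)
  rw [← card_univ, ← huniv]
  exact card_le_three

end SimpleGraph

section Embedding

variable {α β γ : Type*} [Fintype α] [DecidableEq α] [Fintype β] [Fintype γ]
  {T : SimpleGraph α} {H : SimpleGraph β}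

theorem containsSub_graphJoin_bot_of_isBipartiteWith {C L : Finset α}
    (hC : T.IsBipartiteWith ↑C ↑Cᶜ) {s : Set α} {f : α → β} (hf : s.InjOn f)
    (hL : ∀ ⦃l w⦄, l ∈ L → T.Adj l w → l ∈ s ∧ w ∈ s ∧ H.Adj (f l) (f w))
    (hleft : #(C \ L) ≤ card γ) (hright : card α ≤ #(C \ L) + card β) :
    ContainsSub T (graphJoin (⊥ : SimpleGraph γ) H) := by
  refine containsSub_graphJoin_bot (C \ L) (fun u v hu hv huv => ?_) hleft ?_
  · have := hC.mem_of_mem_adj (mem_sdiff.1 hu).1 huv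
    exact (Finset.mem_compl.1 this) (mem_sdiff.1 hv).1
  refine containsSub_of_injOn (s := Subtype.val ⁻¹' s) (f := f ∘ Subtype.val) ?_
    (hf.comp Subtype.val_injective.injOn fun _ h => h) ?_
  · rw [Fintype.card_compl_set, Set.fintypeCard_eq_ncard, Set.ncard_coe_finset]
    omega
  · rintro ⟨u, hu⟩ ⟨v, hv⟩ huv
    simp only [comap_adj, Function.Embedding.coe_subtype] at huv
    simp only [Set.mem_compl_iff, mem_coe, mem_sdiff, not_and, not_not] at hu hv
    rcases hC.mem_of_adj huv with ⟨huC, -⟩ | ⟨-, hvC⟩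
    · exact hL (hu huC) huv
    · obtain ⟨hvs, hus, hadj⟩ := hL (hv hvC) huv.symm
      exact ⟨hus, hvs, hadj.symm⟩

variable [DecidableRel T.Adj] {k : ℕ} {A : Finset α}

theorem containsSub_graphJoin_twoEdgesGraph_of_leaf_mem (hk : 0 < k)
    (hA : T.IsBipartiteWith ↑A ↑Aᶜ) (hcard : card α = 2 * k + 3) (hAcard : #A = k + 1)
    {a b : α} (haA : a ∈ A) (ha : T.degree a = 1) (hab : T.Adj a b) :
    ContainsSub T (graphJoin (⊥ : SimpleGraph (Fin k)) (twoEdgesGraph k)) := by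
  let f : α → Fin (2 * k + 2) := fun v =>
    if v = a then ⟨2 * k, by omega⟩ else ⟨2 * k + 1, by omega⟩
  refine containsSub_graphJoin_bot_of_isBipartiteWith hA (L := {a}) (s := {a, b}) (f := f)
    ?_ ?_ ?_ ?_
  · rintro u (rfl | rfl) v (rfl | rfl) huv <;> simp_all [f, hab.ne']
  · rintro l w hl hlw
    rw [mem_singleton] at hl
    subst hl
    obtain rfl := (degree_eq_one_iff_existsUnique_adj.1 ha).unique hlw hab
    simp [f, hab.ne', twoEdgesGraph]
  · simp [sdiff_singleton_eq_erase, card_erase_of_mem haA, hAcard]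
  · simp [sdiff_singleton_eq_erase, card_erase_of_mem haA, hAcard, hcard]
    omega

theorem containsSub_graphJoin_twoEdgesGraph_of_two_leaves (hk : 0 < k)
    (hA : T.IsBipartiteWith ↑A ↑Aᶜ) (hcard : card α = 2 * k + 3) (hAcard : #A = k + 1)
    {l₁ l₂ a₁ a₂ : α} (hl₁A : l₁ ∉ A) (hl₂A : l₂ ∉ A) (hl₁ : T.degree l₁ = 1)
    (hl₂ : T.degree l₂ = 1) (h₁ : T.Adj l₁ a₁) (h₂ : T.Adj l₂ a₂) (ha : a₁ ≠ a₂) :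
    ContainsSub T (graphJoin (⊥ : SimpleGraph (Fin k)) (twoEdgesGraph k)) := by
  have hAc : T.IsBipartiteWith ↑Aᶜ ↑Aᶜᶜ := by simpa using hA.symm
  have ha₁A : a₁ ∈ A := by simpa using hAc.mem_of_mem_adj (by simpa using hl₁A) h₁
  have ha₂A : a₂ ∈ A := by simpa using hAc.mem_of_mem_adj (by simpa using hl₂A) h₂
  have hl : l₁ ≠ l₂ := by
    rintro rfl
    exact ha ((degree_eq_one_iff_existsUnique_adj.1 hl₁).unique h₁ h₂)
  have hla : ∀ ⦃l a⦄, l ∉ A → a ∈ A → l ≠ a := by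
    rintro l a hl ha rfl
    exact hl ha
  let f : α → Fin (2 * k + 2) := fun v =>
    if v = a₁ then ⟨2 * k - 2, by omega⟩ else if v = l₁ then ⟨2 * k - 1, by omega⟩
    else if v = a₂ then ⟨2 * k, by omega⟩ else ⟨2 * k + 1, by omega⟩
  have hfa₁ : f a₁ = ⟨2 * k - 2, by omega⟩ := if_pos rfl
  have hfl₁ : f l₁ = ⟨2 * k - 1, by omega⟩ := by simp [f, hla hl₁A ha₁A]
  have hfa₂ : f a₂ = ⟨2 * k, by omega⟩ := by simp [f, ha.symm, (hla hl₁A ha₂A).symm]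
  have hfl₂ : f l₂ = ⟨2 * k + 1, by omega⟩ := by
    simp [f, hla hl₂A ha₁A, hl.symm, hla hl₂A ha₂A]
  have hsub : {l₁, l₂} ⊆ Aᶜ := by simp [insert_subset_iff, hl₁A, hl₂A]
  have hleft : #(Aᶜ \ {l₁, l₂}) = k := by
    rw [card_sdiff_of_subset hsub, card_compl, card_pair hl]
    omega
  refine containsSub_graphJoin_bot_of_isBipartiteWith hAc (L := {l₁, l₂})
    (s := {l₁, a₁, l₂, a₂}) (f := f) ?_ ?_ (by simp [hleft]) (by simp [hleft]; omega)
  · intro u hu v hv huv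
    simp only [Set.mem_insert_iff, Set.mem_singleton_iff] at hu hv
    rcases hu with rfl | rfl | rfl | rfl <;> rcases hv with rfl | rfl | rfl | rfl <;>
      simp only [hfa₁, hfl₁, hfa₂, hfl₂, Fin.mk.injEq] at huv <;> first | rfl | omega
  · intro l w hl hlw
    rw [Finset.mem_insert, Finset.mem_singleton] at hl
    rcases hl with rfl | rfl
    · obtain rfl := (degree_eq_one_iff_existsUnique_adj.1 hl₁).unique hlw h₁
      refine ⟨by simp, by simp, ?_⟩
      rw [hfl₁, hfa₁]
      refine ⟨by simp; omega, Or.inr (Or.inl ⟨rfl, rfl⟩)⟩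
    · obtain rfl := (degree_eq_one_iff_existsUnique_adj.1 hl₂).unique hlw h₂
      refine ⟨by simp, by simp, ?_⟩
      rw [hfl₂, hfa₂]
      refine ⟨by simp, Or.inr (Or.inr (Or.inr ⟨rfl, rfl⟩))⟩

end Embedding

theorem stmt_9 (k : ℕ) (hk : 0 < k) {α : Type*} [Fintype α]
    (T : SimpleGraph α) (hT : T.IsTree) (hcard : Fintype.card α = 2 * k + 3) :
    ContainsSub T (graphJoin (⊥ : SimpleGraph (Fin k)) (twoEdgesGraph k)) := by
  classical
  obtain ⟨A, hA, hAcard⟩ := hT.isBipartite.exists_isBipartiteWith_compl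
  have hsumA : ∑ v ∈ A, T.degree v = 2 * k + 2 := by
    have := hT.card_edgeFinset
    rw [isBipartiteWith_sum_degrees_eq_card_edges hA]
    omega
  have hApos : 0 < #A := card_pos.2 (nonempty_of_sum_ne_zero (hsumA.trans_ne (by omega)))
  obtain hAk | hAk : #A ≤ k ∨ #A = k + 1 := by omega
  · exact containsSub_graphJoin_bot_of_isBipartiteWith hA (L := ∅)
      (Set.injOn_empty fun _ => (⟨0, by omega⟩ : Fin (2 * k + 2))) (by simp)
      (by simpa using hAk) (by simp; omega)
  by_cases hleaf : ∃ a ∈ A, T.degree a = 1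
  · obtain ⟨a, haA, ha⟩ := hleaf
    obtain ⟨b, hab, -⟩ := degree_eq_one_iff_existsUnique_adj.1 ha
    exact containsSub_graphJoin_twoEdgesGraph_of_leaf_mem hk hA hcard hAk haA ha hab
  have : Nontrivial α := Fintype.one_lt_card_iff_nontrivial.1 (by omega)
  have htwo : ∀ v ∈ A, 2 ≤ T.degree v := fun v hv => by
    have := hT.connected.preconnected.degree_pos_of_nontrivial v
    have : T.degree v ≠ 1 := fun h => hleaf ⟨v, hv, h⟩
    omega
  have hdeg : ∀ v ∈ A, T.degree v = 2 := fun v hv =>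
    ((sum_eq_sum_iff_of_le htwo).1 (by rw [hsumA, sum_const, smul_eq_mul]; omega) v hv).symm
  obtain ⟨l₁, l₂, hl, hl₁, hl₂⟩ := hT.exists_ne_and_degree_eq_one
  obtain ⟨a₁, h₁, -⟩ := degree_eq_one_iff_existsUnique_adj.1 hl₁
  obtain ⟨a₂, h₂, -⟩ := degree_eq_one_iff_existsUnique_adj.1 hl₂
  have hl₁A : l₁ ∉ A := fun h => by simp [hdeg l₁ h] at hl₁
  have hl₂A : l₂ ∉ A := fun h => by simp [hdeg l₂ h] at hl₂
  refine containsSub_graphJoin_twoEdgesGraph_of_two_leaves hk hA hcard hAk hl₁A hl₂A hl₁ hl₂ h₁ h₂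
    ?_
  rintro rfl
  have ha₁A : a₁ ∈ A := by simpa using hA.symm.mem_of_mem_adj (by simpa using hl₁A) h₁
  have := hT.connected.preconnected.card_le_three_of_degree_eq_two (hdeg a₁ ha₁A) hl₁ hl₂ hl h₁ h₂
  omega
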